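/- arXiv:2501.07383 — 2 statements merged into one kernel-verified Lean document; each statement's English description precedes it below -/
import Mathlib

section
/- In the standard-form setting of the convergence proof (a10(x̄) = ∅, p = |a00(x̄)|, F₁ⱼ(x) = xⱼ for j = 1,…,κ, F₂ⱼ(x) = x_{κ+j} for j = 1,…,p), let x^t be a KKT point of the Scholtes regularization S(t) converging to a nondegenerate C-stationary point x̄ of MPCC with unique multipliers (σ̄, ϱ̄) as t → 0. Denote by α = |a01(x̄)| + 2|a00(x̄)| the codimension of T_x̄ and by α^S_t = |H(x^t)| + |N₁(x^t)| + |N₂(x^t)| the codimension of T^S_{x^t}. Then for all sufficiently small t, α − α^S_t ≤ |a01⁰(x̄)| + |a00⁻(x̄)|, where a01⁰(x̄) = {j ∈ a01(x̄) : σ̄₁ⱼ = 0} and a00⁻(x̄) = {j ∈ a00(x̄) : ϱ̄₁ⱼ < 0 and ϱ̄₂ⱼ < 0}. -/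
open Filter Topology Set

namespace MPCCPaper

variable {n κ : ℕ}

/-- Differential of the `j`-th component of `F` at `x`. -/
noncomputable def Dc (F : (Fin n → ℝ) → Fin κ → ℝ) (j : Fin κ) (x : Fin n → ℝ) :
    (Fin n → ℝ) →L[ℝ] ℝ :=
  fderiv ℝ (fun y => F y j) x

/-- The MPCC feasible set `M`. -/
def Mset (F1 F2 : (Fin n → ℝ) → Fin κ → ℝ) : Set (Fin n → ℝ) :=
  {x | ∀ j, F1 x j * F2 x j = 0 ∧ 0 ≤ F1 x j ∧ 0 ≤ F2 x j}

/-- Feasible set `M^S(t)` of the Scholtes regularization. -/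
def MS (F1 F2 : (Fin n → ℝ) → Fin κ → ℝ) (t : ℝ) : Set (Fin n → ℝ) :=
  {x | ∀ j, F1 x j * F2 x j ≤ t ∧ 0 ≤ F1 x j ∧ 0 ≤ F2 x j}

/-- Feasible set `M^{S=}(t)` of the smoothing with equality constraints. -/
def MSeq (F1 F2 : (Fin n → ℝ) → Fin κ → ℝ) (t : ℝ) : Set (Fin n → ℝ) :=
  {x | ∀ j, F1 x j * F2 x j = t ∧ 0 ≤ F1 x j ∧ 0 ≤ F2 x j}

def a01 (F1 F2 : (Fin n → ℝ) → Fin κ → ℝ) (x : Fin n → ℝ) : Set (Fin κ) :=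
  {j | F1 x j = 0 ∧ 0 < F2 x j}

def a10 (F1 F2 : (Fin n → ℝ) → Fin κ → ℝ) (x : Fin n → ℝ) : Set (Fin κ) :=
  {j | 0 < F1 x j ∧ F2 x j = 0}

def a00 (F1 F2 : (Fin n → ℝ) → Fin κ → ℝ) (x : Fin n → ℝ) : Set (Fin κ) :=
  {j | F1 x j = 0 ∧ F2 x j = 0}

/-- Active set `H(x)` of the regularized constraints. -/
def Hset (F1 F2 : (Fin n → ℝ) → Fin κ → ℝ) (t : ℝ) (x : Fin n → ℝ) : Set (Fin κ) :=
  {j | F1 x j * F2 x j = t}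

def N1set (F1 : (Fin n → ℝ) → Fin κ → ℝ) (x : Fin n → ℝ) : Set (Fin κ) :=
  {j | F1 x j = 0}

def N2set (F2 : (Fin n → ℝ) → Fin κ → ℝ) (x : Fin n → ℝ) : Set (Fin κ) :=
  {j | F2 x j = 0}

/-- MPCC-tailored linear independence constraint qualification. -/
def MPCCLICQ (F1 F2 : (Fin n → ℝ) → Fin κ → ℝ) (x : Fin n → ℝ) : Prop :=
  LinearIndependent ℝ
    (Sum.elim
      (fun j : ↥(a01 F1 F2 x ∪ a00 F1 F2 x) => Dc F1 j.1 x)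
      (fun j : ↥(a10 F1 F2 x ∪ a00 F1 F2 x) => Dc F2 j.1 x))

/-- Gradient of the product constraint `F1_j · F2_j` at `x`. -/
noncomputable def gradProd (F1 F2 : (Fin n → ℝ) → Fin κ → ℝ) (j : Fin κ) (x : Fin n → ℝ) :
    (Fin n → ℝ) →L[ℝ] ℝ :=
  F2 x j • Dc F1 j x + F1 x j • Dc F2 j x

/-- LICQ for the Scholtes regularization `S(t)`. -/
def SLICQ (F1 F2 : (Fin n → ℝ) → Fin κ → ℝ) (t : ℝ) (x : Fin n → ℝ) : Prop :=
  LinearIndependent ℝ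
    (Sum.elim (fun j : ↥(Hset F1 F2 t x) => gradProd F1 F2 j.1 x)
      (Sum.elim (fun j : ↥(N1set F1 x) => Dc F1 j.1 x)
        (fun j : ↥(N2set F2 x) => Dc F2 j.1 x)))

/-- W-stationarity with prescribed multipliers (supported on the active index sets). -/
structure WStatWith (f : (Fin n → ℝ) → ℝ) (F1 F2 : (Fin n → ℝ) → Fin κ → ℝ)
    (x : Fin n → ℝ) (σ1 σ2 ϱ1 ϱ2 : Fin κ → ℝ) : Prop where
  feas : x ∈ Mset F1 F2
  supp_s1 : ∀ j, j ∉ a01 F1 F2 x → σ1 j = 0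
  supp_s2 : ∀ j, j ∉ a10 F1 F2 x → σ2 j = 0
  supp_r1 : ∀ j, j ∉ a00 F1 F2 x → ϱ1 j = 0
  supp_r2 : ∀ j, j ∉ a00 F1 F2 x → ϱ2 j = 0
  stat : fderiv ℝ f x =
    ∑ j, (σ1 j • Dc F1 j x + σ2 j • Dc F2 j x + ϱ1 j • Dc F1 j x + ϱ2 j • Dc F2 j x)

/-- C-stationarity with prescribed multipliers. -/
def CStatWith (f : (Fin n → ℝ) → ℝ) (F1 F2 : (Fin n → ℝ) → Fin κ → ℝ)
    (x : Fin n → ℝ) (σ1 σ2 ϱ1 ϱ2 : Fin κ → ℝ) : Prop :=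
  WStatWith f F1 F2 x σ1 σ2 ϱ1 ϱ2 ∧ ∀ j ∈ a00 F1 F2 x, 0 ≤ ϱ1 j * ϱ2 j

/-- S-stationarity with prescribed multipliers. -/
def SStatWith (f : (Fin n → ℝ) → ℝ) (F1 F2 : (Fin n → ℝ) → Fin κ → ℝ)
    (x : Fin n → ℝ) (σ1 σ2 ϱ1 ϱ2 : Fin κ → ℝ) : Prop :=
  WStatWith f F1 F2 x σ1 σ2 ϱ1 ϱ2 ∧ ∀ j ∈ a00 F1 F2 x, 0 ≤ ϱ1 j ∧ 0 ≤ ϱ2 j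

/-- The MPCC Lagrange function for given multipliers. -/
noncomputable def Lag (f : (Fin n → ℝ) → ℝ) (F1 F2 : (Fin n → ℝ) → Fin κ → ℝ)
    (σ1 σ2 ϱ1 ϱ2 : Fin κ → ℝ) (x : Fin n → ℝ) : ℝ :=
  f x - ∑ j, (σ1 j * F1 x j + σ2 j * F2 x j + ϱ1 j * F1 x j + ϱ2 j * F2 x j)

/-- The Hessian of `g` at `x` as a bilinear map, evaluated at `(ξ, ζ)`. -/
noncomputable def hBil (g : (Fin n → ℝ) → ℝ) (x ξ ζ : Fin n → ℝ) : ℝ :=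
  iteratedFDeriv ℝ 2 g x ![ξ, ζ]

/-- The Hessian quadratic form of `g` at `x`. -/
noncomputable def hQ (g : (Fin n → ℝ) → ℝ) (x ξ : Fin n → ℝ) : ℝ := hBil g x ξ ξ

/-- The tangent space `T_x` of MPCC at `x`. -/
def Tspace (F1 F2 : (Fin n → ℝ) → Fin κ → ℝ) (x : Fin n → ℝ) : Set (Fin n → ℝ) :=
  {ξ | (∀ j ∈ a01 F1 F2 x ∪ a00 F1 F2 x, Dc F1 j x ξ = 0) ∧
       (∀ j ∈ a10 F1 F2 x ∪ a00 F1 F2 x, Dc F2 j x ξ = 0)}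

/-- Nondegeneracy of a bilinear form on a set (subspace). -/
def NondegOn (B : (Fin n → ℝ) → (Fin n → ℝ) → ℝ) (T : Set (Fin n → ℝ)) : Prop :=
  ∀ ξ ∈ T, (∀ ζ ∈ T, B ξ ζ = 0) → ξ = 0

/-- `Q` has negative index `q` on `T`: `q` is the maximal dimension of a subspace of `T`
on which `Q` is negative definite. -/
def HasNegIndexOn (Q : (Fin n → ℝ) → ℝ) (T : Set (Fin n → ℝ)) (q : ℕ) : Prop :=
  (∃ W : Submodule ℝ (Fin n → ℝ), (W : Set (Fin n → ℝ)) ⊆ T ∧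
      Module.finrank ℝ ↥W = q ∧ ∀ ξ ∈ W, ξ ≠ 0 → Q ξ < 0) ∧
  (∀ W : Submodule ℝ (Fin n → ℝ), (W : Set (Fin n → ℝ)) ⊆ T →
      (∀ ξ ∈ W, ξ ≠ 0 → Q ξ < 0) → Module.finrank ℝ ↥W ≤ q)

/-- Nondegenerate C-stationary point (NDC1, NDC2, NDC3) with prescribed multipliers. -/
def NondegCStat (f : (Fin n → ℝ) → ℝ) (F1 F2 : (Fin n → ℝ) → Fin κ → ℝ)
    (x : Fin n → ℝ) (σ1 σ2 ϱ1 ϱ2 : Fin κ → ℝ) : Prop :=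
  CStatWith f F1 F2 x σ1 σ2 ϱ1 ϱ2 ∧ MPCCLICQ F1 F2 x ∧
  (∀ j ∈ a00 F1 F2 x, 0 < ϱ1 j * ϱ2 j) ∧
  NondegOn (hBil (Lag f F1 F2 σ1 σ2 ϱ1 ϱ2) x) (Tspace F1 F2 x)

/-- Condition NDC4: non-biactive multipliers do not vanish. -/
def NDC4 (F1 F2 : (Fin n → ℝ) → Fin κ → ℝ) (x : Fin n → ℝ) (σ1 σ2 : Fin κ → ℝ) : Prop :=
  (∀ j ∈ a01 F1 F2 x, σ1 j ≠ 0) ∧ (∀ j ∈ a10 F1 F2 x, σ2 j ≠ 0)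

/-- The biactive index: number of negative biactive multiplier pairs. -/
noncomputable def BIndex (F1 F2 : (Fin n → ℝ) → Fin κ → ℝ) (x : Fin n → ℝ)
    (ϱ1 ϱ2 : Fin κ → ℝ) : ℕ :=
  {j | j ∈ a00 F1 F2 x ∧ ϱ1 j < 0 ∧ ϱ2 j < 0}.ncard

/-- The C-index of a C-stationary point equals `c`. -/
def HasCIndex (f : (Fin n → ℝ) → ℝ) (F1 F2 : (Fin n → ℝ) → Fin κ → ℝ)
    (x : Fin n → ℝ) (σ1 σ2 ϱ1 ϱ2 : Fin κ → ℝ) (c : ℕ) : Prop :=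
  ∃ q : ℕ,
    HasNegIndexOn (hQ (Lag f F1 F2 σ1 σ2 ϱ1 ϱ2) x) (Tspace F1 F2 x) q ∧
    c = q + BIndex F1 F2 x ϱ1 ϱ2

/-- Karush-Kuhn-Tucker point of the Scholtes regularization `S(t)` with multipliers. -/
structure KKTWith (f : (Fin n → ℝ) → ℝ) (F1 F2 : (Fin n → ℝ) → Fin κ → ℝ)
    (t : ℝ) (x : Fin n → ℝ) (η ν1 ν2 : Fin κ → ℝ) : Prop where
  feas : x ∈ MS F1 F2 t
  eta_nn : ∀ j, 0 ≤ η j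
  nu1_nn : ∀ j, 0 ≤ ν1 j
  nu2_nn : ∀ j, 0 ≤ ν2 j
  comp_eta : ∀ j, η j * (t - F1 x j * F2 x j) = 0
  comp_nu1 : ∀ j, ν1 j * F1 x j = 0
  comp_nu2 : ∀ j, ν2 j * F2 x j = 0
  stat : fderiv ℝ f x =
    ∑ j, (-(η j) • gradProd F1 F2 j x + ν1 j • Dc F1 j x + ν2 j • Dc F2 j x)

/-- The Lagrange function of the Scholtes regularization `S(t)`. -/
noncomputable def LagS (f : (Fin n → ℝ) → ℝ) (F1 F2 : (Fin n → ℝ) → Fin κ → ℝ)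
    (t : ℝ) (η ν1 ν2 : Fin κ → ℝ) (x : Fin n → ℝ) : ℝ :=
  f x - ∑ j, (η j * (t - F1 x j * F2 x j) + ν1 j * F1 x j + ν2 j * F2 x j)

/-- The tangent space `T^S_x` of `S(t)` at `x`. -/
def TspaceS (F1 F2 : (Fin n → ℝ) → Fin κ → ℝ) (t : ℝ) (x : Fin n → ℝ) :
    Set (Fin n → ℝ) :=
  {ξ | (∀ j ∈ Hset F1 F2 t x, gradProd F1 F2 j x ξ = 0) ∧
       (∀ j ∈ N1set F1 x, Dc F1 j x ξ = 0) ∧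
       (∀ j ∈ N2set F2 x, Dc F2 j x ξ = 0)}

/-- Nondegenerate KKT point of `S(t)` (ND1, ND2, ND3) with prescribed multipliers. -/
def NondegKKT (f : (Fin n → ℝ) → ℝ) (F1 F2 : (Fin n → ℝ) → Fin κ → ℝ)
    (t : ℝ) (x : Fin n → ℝ) (η ν1 ν2 : Fin κ → ℝ) : Prop :=
  KKTWith f F1 F2 t x η ν1 ν2 ∧ SLICQ F1 F2 t x ∧
  (∀ j ∈ Hset F1 F2 t x, 0 < η j) ∧
  (∀ j ∈ N1set F1 x, 0 < ν1 j) ∧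
  (∀ j ∈ N2set F2 x, 0 < ν2 j) ∧
  NondegOn (hBil (LagS f F1 F2 t η ν1 ν2) x) (TspaceS F1 F2 t x)

/-- KKT point of the smoothing `S^=(t)` with multipliers. -/
structure KKTEqWith (f : (Fin n → ℝ) → ℝ) (F1 F2 : (Fin n → ℝ) → Fin κ → ℝ)
    (t : ℝ) (x : Fin n → ℝ) (lam ν1 ν2 : Fin κ → ℝ) : Prop where
  feas : x ∈ MSeq F1 F2 t
  nu1_nn : ∀ j, 0 ≤ ν1 j
  nu2_nn : ∀ j, 0 ≤ ν2 j
  comp_nu1 : ∀ j, ν1 j * F1 x j = 0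
  comp_nu2 : ∀ j, ν2 j * F2 x j = 0
  stat : fderiv ℝ f x =
    ∑ j, (lam j • gradProd F1 F2 j x + ν1 j • Dc F1 j x + ν2 j • Dc F2 j x)

/-- The Lagrange function of the smoothing `S^=(t)`. -/
noncomputable def LagSeq (f : (Fin n → ℝ) → ℝ) (F1 F2 : (Fin n → ℝ) → Fin κ → ℝ)
    (t : ℝ) (lam ν1 ν2 : Fin κ → ℝ) (x : Fin n → ℝ) : ℝ :=
  f x - ∑ j, (lam j * (F1 x j * F2 x j - t) + ν1 j * F1 x j + ν2 j * F2 x j)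

/-- The tangent space `T^{S=}_x` of `S^=(t)` at `x`. -/
def TspaceSeq (F1 F2 : (Fin n → ℝ) → Fin κ → ℝ) (x : Fin n → ℝ) : Set (Fin n → ℝ) :=
  {ξ | (∀ j, gradProd F1 F2 j x ξ = 0) ∧
       (∀ j, F1 x j = 0 → Dc F1 j x ξ = 0) ∧
       (∀ j, F2 x j = 0 → Dc F2 j x ξ = 0)}

/-- LICQ for the smoothing `S^=(t)` at `x`: gradients of all active constraints
(all equality constraints together with the active bound constraints) are linearly
independent. -/
def SeqLICQ (F1 F2 : (Fin n → ℝ) → Fin κ → ℝ) (x : Fin n → ℝ) : Prop :=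
  LinearIndependent ℝ
    (Sum.elim (fun j : Fin κ => gradProd F1 F2 j x)
      (Sum.elim (fun j : ↥(N1set F1 x) => Dc F1 j.1 x)
        (fun j : ↥(N2set F2 x) => Dc F2 j.1 x)))

/-- Nondegenerate KKT point of the smoothing `S^=(t)` with prescribed multipliers. -/
def NondegKKTEq (f : (Fin n → ℝ) → ℝ) (F1 F2 : (Fin n → ℝ) → Fin κ → ℝ)
    (t : ℝ) (x : Fin n → ℝ) (lam ν1 ν2 : Fin κ → ℝ) : Prop :=
  KKTEqWith f F1 F2 t x lam ν1 ν2 ∧ SeqLICQ F1 F2 x ∧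
  (∀ j ∈ N1set F1 x, 0 < ν1 j) ∧
  (∀ j ∈ N2set F2 x, 0 < ν2 j) ∧
  NondegOn (hBil (LagSeq f F1 F2 t lam ν1 ν2) x) (TspaceSeq F1 F2 x)

/-- The critical cone `C_x` associated with an S-stationary point and its multipliers. -/
def Ccone (F1 F2 : (Fin n → ℝ) → Fin κ → ℝ) (x : Fin n → ℝ)
    (σ1 σ2 ϱ1 ϱ2 : Fin κ → ℝ) : Set (Fin n → ℝ) :=
  {ξ | (∀ j, ((j ∈ a01 F1 F2 x ∧ σ1 j ≠ 0) ∨ (j ∈ a00 F1 F2 x ∧ 0 < ϱ1 j)) →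
        Dc F1 j x ξ = 0) ∧
       (∀ j, ((j ∈ a10 F1 F2 x ∧ σ2 j ≠ 0) ∨ (j ∈ a00 F1 F2 x ∧ 0 < ϱ2 j)) →
        Dc F2 j x ξ = 0)}

/-- The cone `C^=_x` of critical directions used for MPCC-SOC. -/
def CconeEq (F1 F2 : (Fin n → ℝ) → Fin κ → ℝ) (x : Fin n → ℝ)
    (ϱ1 ϱ2 : Fin κ → ℝ) : Set (Fin n → ℝ) :=
  {ξ | (∀ j, (j ∈ a01 F1 F2 x ∨ (j ∈ a00 F1 F2 x ∧ 0 < ϱ1 j)) → Dc F1 j x ξ = 0) ∧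
       (∀ j, (j ∈ a10 F1 F2 x ∨ (j ∈ a00 F1 F2 x ∧ 0 < ϱ2 j)) → Dc F2 j x ξ = 0) ∧
       (∀ j ∈ a00 F1 F2 x, ϱ1 j = 0 → 0 ≤ Dc F1 j x ξ) ∧
       (∀ j ∈ a00 F1 F2 x, ϱ2 j = 0 → 0 ≤ Dc F2 j x ξ)}

/-- Strong second order sufficiency condition. -/
def SSOSC (f : (Fin n → ℝ) → ℝ) (F1 F2 : (Fin n → ℝ) → Fin κ → ℝ)
    (x : Fin n → ℝ) (σ1 σ2 ϱ1 ϱ2 : Fin κ → ℝ) : Prop :=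
  ∀ ξ ∈ Ccone F1 F2 x σ1 σ2 ϱ1 ϱ2, ξ ≠ 0 → 0 < hQ (Lag f F1 F2 σ1 σ2 ϱ1 ϱ2) x ξ

/-- Second order condition for MPCC (MPCC-SOC). -/
def MPCCSOC (f : (Fin n → ℝ) → ℝ) (F1 F2 : (Fin n → ℝ) → Fin κ → ℝ)
    (x : Fin n → ℝ) (σ1 σ2 ϱ1 ϱ2 : Fin κ → ℝ) : Prop :=
  ∀ ξ ∈ CconeEq F1 F2 x ϱ1 ϱ2, ξ ≠ 0 → 0 < hQ (Lag f F1 F2 σ1 σ2 ϱ1 ϱ2) x ξ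

end MPCCPaper

/-! Write the stationarity condition of the regularization `S(t)` at `x^t` as
`Df = ∑ⱼ (ν₁ⱼ - ηⱼ F₂ⱼ) DF₁ⱼ + (ν₂ⱼ - ηⱼ F₁ⱼ) DF₂ⱼ`. By MPCC-LICQ these coefficients converge to
the multipliers `σ̄ + ϱ̄` of `x̄`: the only terms outside the LICQ family are `DF₂ⱼ` for
`j ∈ a01(x̄)`, and complementarity makes their coefficients `O(t)` relative to those of `DF₁ⱼ`.
So for small `t`, every `j ∈ a01(x̄)` with `σ̄₁ⱼ ≠ 0` and every biactive `j` (where `ϱ̄₁ⱼ ≠ 0` by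
NDC2) has a nonzero `DF₁ⱼ`-coefficient, which forces `F₁ⱼ(x^t) = 0` or `j ∈ H(x^t)`; and every
biactive `j` with `ϱ̄₂ⱼ > 0` has a positive `DF₂ⱼ`-coefficient, which forces `F₂ⱼ(x^t) = 0`.
Counting these indices gives the estimate. -/

theorem Fintype.sum_set_coe_of_eq_zero {ι M : Type*} [Fintype ι] [AddCommMonoid M]
    {S : Set ι} [Fintype S] {g : ι → M} (hg : ∀ j ∉ S, g j = 0) :
    ∑ j : S, g j = ∑ j, g j := by
  rw [Finset.sum_set_coe]
  exact Finset.sum_subset (Finset.subset_univ _) fun j _ hj => hg j (by simpa using hj)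

theorem LinearIndependent.tendsto_of_approx_linearCombination {α ι E : Type*} [Fintype ι]
    [NormedAddCommGroup E] [NormedSpace ℝ E] {l : Filter α} {v₀ : ι → E}
    (hv₀ : LinearIndependent ℝ v₀) {v : α → ι → E} (hv : ∀ i, Tendsto (v · i) l (𝓝 (v₀ i)))
    {w : ι → ℝ} {y : α → E} (hy : Tendsto y l (𝓝 (∑ i, w i • v₀ i)))
    {c : α → ι → ℝ} {ε : α → ℝ} (hε : Tendsto ε l (𝓝 0))
    (hc : ∀ᶠ a in l, ‖∑ i, c a i • v a i - y a‖ ≤ ε a * ‖c a‖) :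
    Tendsto c l (𝓝 w) := by
  obtain ⟨K, -, hK⟩ := (Fintype.linearCombination ℝ v₀).injective_iff_antilipschitz.mp
    hv₀.fintypeLinearCombination_injective
  have hbound (d : ι → ℝ) : ‖d‖ ≤ K * ‖∑ i, d i • v₀ i‖ := by
    simpa [Fintype.linearCombination_apply] using ZeroHomClass.bound_of_antilipschitz _ hK d
  set δ : α → ℝ := fun a => ∑ i, ‖v a i - v₀ i‖
  have hδ : Tendsto δ l (𝓝 0) := by
    simpa using tendsto_finsetSum _ fun i _ => tendsto_iff_norm_sub_tendsto_zero.mp (hv i)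
  have hdrift (a : α) : ‖∑ i, c a i • (v a i - v₀ i)‖ ≤ δ a * ‖c a‖ := by
    rw [Finset.sum_mul]
    refine (norm_sum_le _ _).trans (Finset.sum_le_sum fun i _ => ?_)
    rw [norm_smul, mul_comm]
    exact mul_le_mul_of_nonneg_left (norm_le_pi_norm (c a) i) (norm_nonneg _)
  set ρ : α → ℝ := fun a => δ a + |ε a|
  set e : α → ℝ := fun a => ‖y a - ∑ i, w i • v₀ i‖
  have he : Tendsto e l (𝓝 0) := tendsto_iff_norm_sub_tendsto_zero.mp hy
  have hρ : Tendsto (fun a => K * ρ a) l (𝓝 0) := by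
    simpa using (hδ.add hε.abs).const_mul (K : ℝ)
  -- The error term `K ρ ‖c‖` is absorbed into the left-hand side once `K ρ ≤ 1 / 2`.
  have hclose : ∀ᶠ a in l, ‖c a - w‖ ≤ 2 * K * (ρ a * ‖w‖ + e a) := by
    filter_upwards [hc, hρ.eventually_le_const (by norm_num : (0 : ℝ) < 1 / 2)] with a hca hKρ
    have hsplit : ∑ i, (c a - w) i • v₀ i
        = (∑ i, c a i • v a i - y a) - ∑ i, c a i • (v a i - v₀ i)
          + (y a - ∑ i, w i • v₀ i) := by
      simp only [Pi.sub_apply, sub_smul, smul_sub, Finset.sum_sub_distrib]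
      abel
    have hle : ‖c a - w‖ ≤ K * (ρ a * ‖c a‖ + e a) := by
      refine (hbound _).trans (mul_le_mul_of_nonneg_left ?_ K.coe_nonneg)
      rw [hsplit]
      refine (norm_add_le _ _).trans (add_le_add_left ((norm_sub_le _ _).trans ?_) _)
      have := mul_le_mul_of_nonneg_right (le_abs_self (ε a)) (norm_nonneg (c a))
      simp only [ρ, add_mul]
      linarith [hdrift a]
    have hKρ0 : 0 ≤ K * ρ a :=
      mul_nonneg K.coe_nonneg (add_nonneg (Finset.sum_nonneg fun i _ => norm_nonneg _)
        (abs_nonneg _))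
    nlinarith [mul_le_mul_of_nonneg_left (norm_le_norm_sub_add (c a) w) hKρ0,
      mul_nonneg (sub_nonneg.mpr hKρ) (norm_nonneg (c a - w))]
  refine tendsto_iff_norm_sub_tendsto_zero.mpr
    (squeeze_zero' (.of_forall fun a => norm_nonneg _) hclose ?_)
  simpa using (((hδ.add hε.abs).mul_const ‖w‖).add he).const_mul (2 * K : ℝ)

theorem Set.ncard_add_two_mul_ncard_le {ι : Type*} [Finite ι] {A B A₀ B₀ N₁ N₂ H : Set ι}
    (hAB : Disjoint A B) (hA₀ : A₀ ⊆ A) (hB₀ : B₀ ⊆ B) (h₁ : A \ A₀ ∪ B ⊆ N₁ ∪ H)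
    (h₂ : B \ B₀ ⊆ N₂) :
    A.ncard + 2 * B.ncard ≤ H.ncard + N₁.ncard + N₂.ncard + A₀.ncard + B₀.ncard := by
  have hA := Set.ncard_sdiff_add_ncard_of_subset hA₀
  have hB := Set.ncard_sdiff_add_ncard_of_subset hB₀
  have hunion := Set.ncard_union_eq (hAB.mono_left (Set.sdiff_subset (t := A₀)))
  have h₁' := Set.ncard_le_ncard h₁
  have h₂' := Set.ncard_le_ncard h₂
  have := Set.ncard_union_le N₁ H
  omega

namespace MPCCPaper

variable {n κ : ℕ}

section

open scoped Classical

section FeasiblePoint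

variable {F1 F2 : (Fin n → ℝ) → Fin κ → ℝ} {x : Fin n → ℝ} {j : Fin κ}

theorem disjoint_a01_a00 : Disjoint (a01 F1 F2 x) (a00 F1 F2 x) :=
  Set.disjoint_left.mpr fun _ h01 h00 => h01.2.ne' h00.2

theorem disjoint_a10_a00 : Disjoint (a10 F1 F2 x) (a00 F1 F2 x) :=
  Set.disjoint_left.mpr fun _ h10 h00 => h10.1.ne' h00.1

theorem F2_pos_of_notMem_a10_union_a00 (hx : x ∈ Mset F1 F2)
    (hj : j ∉ a10 F1 F2 x ∪ a00 F1 F2 x) : 0 < F2 x j := by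
  obtain ⟨-, hF1, hF2⟩ := hx j
  refine hF2.lt_of_ne fun h0 => hj ?_
  rcases hF1.eq_or_lt with h1 | h1
  · exact Or.inr ⟨h1.symm, h0.symm⟩
  · exact Or.inl ⟨h1, h0.symm⟩

theorem mem_a01_of_notMem_a10_union_a00 (hx : x ∈ Mset F1 F2)
    (hj : j ∉ a10 F1 F2 x ∪ a00 F1 F2 x) : j ∈ a01 F1 F2 x := by
  have hF2 := F2_pos_of_notMem_a10_union_a00 hx hj
  exact ⟨by simpa [hF2.ne'] using (hx j).1, hF2⟩

theorem mem_a01_union_a00_of_a10_eq_empty (hx : x ∈ Mset F1 F2) (ha10 : a10 F1 F2 x = ∅)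
    (j : Fin κ) : j ∈ a01 F1 F2 x ∪ a00 F1 F2 x := by
  obtain ⟨hprod, hF1, hF2⟩ := hx j
  rcases hF1.eq_or_lt with h1 | h1
  · rcases hF2.eq_or_lt with h2 | h2
    · exact Or.inr ⟨h1.symm, h2.symm⟩
    · exact Or.inl ⟨h1.symm, h2⟩
  · have h2 : F2 x j = 0 := (mul_eq_zero.mp hprod).resolve_left h1.ne'
    exact absurd (show j ∈ a10 F1 F2 x from ⟨h1, h2⟩) (ha10 ▸ Set.notMem_empty j)

end FeasiblePoint

/-- The gradients at `y` of the constraints of MPCC active at `x`, indexed as in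
`MPCCLICQ F1 F2 x`. -/
noncomputable def activeGrads (F1 F2 : (Fin n → ℝ) → Fin κ → ℝ) (x y : Fin n → ℝ) :
    ↥(a01 F1 F2 x ∪ a00 F1 F2 x) ⊕ ↥(a10 F1 F2 x ∪ a00 F1 F2 x) → (Fin n → ℝ) →L[ℝ] ℝ :=
  Sum.elim (fun j => Dc F1 j y) (fun j => Dc F2 j y)

def activeCoeffs (F1 F2 : (Fin n → ℝ) → Fin κ → ℝ) (x : Fin n → ℝ) (g1 g2 : Fin κ → ℝ) :
    ↥(a01 F1 F2 x ∪ a00 F1 F2 x) ⊕ ↥(a10 F1 F2 x ∪ a00 F1 F2 x) → ℝ :=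
  Sum.elim (fun j => g1 j) (fun j => g2 j)

theorem sum_activeCoeffs_smul_activeGrads {F1 F2 : (Fin n → ℝ) → Fin κ → ℝ}
    {x : Fin n → ℝ} (g1 g2 : Fin κ → ℝ) (y : Fin n → ℝ) :
    ∑ i, activeCoeffs F1 F2 x g1 g2 i • activeGrads F1 F2 x y i =
      ∑ j : ↥(a01 F1 F2 x ∪ a00 F1 F2 x), g1 j • Dc F1 j y +
        ∑ j : ↥(a10 F1 F2 x ∪ a00 F1 F2 x), g2 j • Dc F2 j y :=
  Fintype.sum_sum_type _

namespace WStatWith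

variable {f : (Fin n → ℝ) → ℝ} {F1 F2 : (Fin n → ℝ) → Fin κ → ℝ} {x : Fin n → ℝ}
  {σ1 σ2 ϱ1 ϱ2 : Fin κ → ℝ}

theorem fderiv_eq_sum_activeCoeffs (h : WStatWith f F1 F2 x σ1 σ2 ϱ1 ϱ2) :
    fderiv ℝ f x =
      ∑ i, activeCoeffs F1 F2 x (σ1 + ϱ1) (σ2 + ϱ2) i • activeGrads F1 F2 x x i := by
  rw [sum_activeCoeffs_smul_activeGrads,
    Fintype.sum_set_coe_of_eq_zero (g := fun j => (σ1 + ϱ1) j • Dc F1 j x),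
    Fintype.sum_set_coe_of_eq_zero (g := fun j => (σ2 + ϱ2) j • Dc F2 j x), h.stat,
    ← Finset.sum_add_distrib]
  · refine Finset.sum_congr rfl fun j _ => ?_
    simp only [Pi.add_apply]
    module
  · intro j hj
    simp [h.supp_s2 j fun h' => hj (Or.inl h'), h.supp_r2 j fun h' => hj (Or.inr h')]
  · intro j hj
    simp [h.supp_s1 j fun h' => hj (Or.inl h'), h.supp_r1 j fun h' => hj (Or.inr h')]

theorem sdiff_union_subset_coeff_ne_zero (h : WStatWith f F1 F2 x σ1 σ2 ϱ1 ϱ2)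
    (hϱ : ∀ j ∈ a00 F1 F2 x, 0 < ϱ1 j * ϱ2 j) :
    a01 F1 F2 x \ {j | j ∈ a01 F1 F2 x ∧ σ1 j = 0} ∪ a00 F1 F2 x ⊆
      {j | j ∈ a01 F1 F2 x ∪ a00 F1 F2 x ∧ (σ1 + ϱ1) j ≠ 0} := by
  rintro j (⟨h01, hσ⟩ | h00)
  · have hϱ1 := h.supp_r1 j (disjoint_a01_a00.notMem_of_mem_left h01)
    exact ⟨Or.inl h01, by simpa [hϱ1] using fun h => hσ ⟨h01, h⟩⟩
  · have hσ1 := h.supp_s1 j (disjoint_a01_a00.notMem_of_mem_right h00)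
    exact ⟨Or.inr h00, by simpa [hσ1] using left_ne_zero_of_mul (hϱ j h00).ne'⟩

theorem a00_sdiff_subset_coeff_pos (h : WStatWith f F1 F2 x σ1 σ2 ϱ1 ϱ2)
    (hϱ : ∀ j ∈ a00 F1 F2 x, 0 < ϱ1 j * ϱ2 j) :
    a00 F1 F2 x \ {j | j ∈ a00 F1 F2 x ∧ ϱ1 j < 0 ∧ ϱ2 j < 0} ⊆
      {j | j ∈ a10 F1 F2 x ∪ a00 F1 F2 x ∧ 0 < (σ2 + ϱ2) j} := by
  rintro j ⟨h00, hneg⟩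
  have hσ2 := h.supp_s2 j (disjoint_a10_a00.notMem_of_mem_right h00)
  refine ⟨Or.inr h00, ?_⟩
  rcases mul_pos_iff.mp (hϱ j h00) with hpos | hneg'
  · simpa [hσ2] using hpos.2
  · exact absurd ⟨h00, hneg'⟩ hneg

end WStatWith

/-- The coefficient of `Dc F1 j x` in the stationarity condition of `KKTWith` (`coeffF2`: of
`Dc F2 j x`); these play the role of the MPCC multipliers. -/
def coeffF1 (F2 : (Fin n → ℝ) → Fin κ → ℝ) (x : Fin n → ℝ) (η ν1 : Fin κ → ℝ) (j : Fin κ) : ℝ :=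
  ν1 j - η j * F2 x j

def coeffF2 (F1 : (Fin n → ℝ) → Fin κ → ℝ) (x : Fin n → ℝ) (η ν2 : Fin κ → ℝ) (j : Fin κ) : ℝ :=
  ν2 j - η j * F1 x j

namespace KKTWith

variable {f : (Fin n → ℝ) → ℝ} {F1 F2 : (Fin n → ℝ) → Fin κ → ℝ} {t : ℝ} {x y : Fin n → ℝ}
  {η ν1 ν2 : Fin κ → ℝ} {j : Fin κ}

theorem fderiv_eq_sum_coeff (h : KKTWith f F1 F2 t y η ν1 ν2) :
    fderiv ℝ f y =
      ∑ j, (coeffF1 F2 y η ν1 j • Dc F1 j y + coeffF2 F1 y η ν2 j • Dc F2 j y) := by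
  rw [h.stat]
  refine Finset.sum_congr rfl fun j _ => ?_
  simp only [gradProd, coeffF1, coeffF2]
  module

theorem nu1_eq_zero (h : KKTWith f F1 F2 t y η ν1 ν2) (hF : F1 y j ≠ 0) : ν1 j = 0 :=
  (mul_eq_zero.mp (h.comp_nu1 j)).resolve_right hF

theorem nu2_eq_zero (h : KKTWith f F1 F2 t y η ν1 ν2) (hF : F2 y j ≠ 0) : ν2 j = 0 :=
  (mul_eq_zero.mp (h.comp_nu2 j)).resolve_right hF

theorem mem_Hset (h : KKTWith f F1 F2 t y η ν1 ν2) (hη : η j ≠ 0) : j ∈ Hset F1 F2 t y :=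
  (sub_eq_zero.mp ((mul_eq_zero.mp (h.comp_eta j)).resolve_left hη)).symm

theorem mem_N1set_union_Hset (h : KKTWith f F1 F2 t y η ν1 ν2)
    (hc : coeffF1 F2 y η ν1 j ≠ 0) : j ∈ N1set F1 y ∪ Hset F1 F2 t y := by
  by_cases hF : F1 y j = 0
  · exact Or.inl hF
  · refine Or.inr (h.mem_Hset fun hη => hc ?_)
    simp [coeffF1, h.nu1_eq_zero hF, hη]

theorem mem_N2set (h : KKTWith f F1 F2 t y η ν1 ν2) (hc : 0 < coeffF2 F1 y η ν2 j) :
    j ∈ N2set F2 y := by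
  by_contra hF
  rw [coeffF2, h.nu2_eq_zero hF] at hc
  nlinarith [h.eta_nn j, (h.feas j).2.1]

theorem abs_coeffF2_le (h : KKTWith f F1 F2 t y η ν1 ν2) (hF2 : 0 < F2 y j) :
    |coeffF2 F1 y η ν2 j| ≤ t * |coeffF1 F2 y η ν1 j| / F2 y j ^ 2 := by
  obtain ⟨hprod, hF1, -⟩ := h.feas j
  rw [le_div_iff₀ (by positivity), coeffF2, h.nu2_eq_zero hF2.ne']
  rcases hF1.eq_or_lt with hF1 | hF1
  · rw [← hF1, mul_zero, sub_zero, abs_zero, zero_mul]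
    exact mul_nonneg (by nlinarith) (abs_nonneg _)
  · rw [coeffF1, h.nu1_eq_zero hF1.ne', zero_sub, zero_sub, abs_neg, abs_neg,
      abs_of_nonneg (mul_nonneg (h.eta_nn j) hF1.le),
      abs_of_nonneg (mul_nonneg (h.eta_nn j) hF2.le)]
    nlinarith [mul_le_mul_of_nonneg_left hprod (mul_nonneg (h.eta_nn j) hF2.le)]

theorem fderiv_eq_sum_activeCoeffs_add (h : KKTWith f F1 F2 t y η ν1 ν2)
    (hcov : ∀ j, j ∈ a01 F1 F2 x ∪ a00 F1 F2 x) :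
    fderiv ℝ f y =
      ∑ i, activeCoeffs F1 F2 x (coeffF1 F2 y η ν1) (coeffF2 F1 y η ν2) i •
          activeGrads F1 F2 x y i +
        ∑ j : {j // j ∉ a10 F1 F2 x ∪ a00 F1 F2 x}, coeffF2 F1 y η ν2 j • Dc F2 j y := by
  rw [h.fderiv_eq_sum_coeff, Finset.sum_add_distrib, sum_activeCoeffs_smul_activeGrads,
    Fintype.sum_set_coe_of_eq_zero (g := fun j => coeffF1 F2 y η ν1 j • Dc F1 j y)
      fun j hj => absurd (hcov j) hj, add_assoc,
    ← Fintype.sum_subtype_add_sum_subtype (· ∈ a10 F1 F2 x ∪ a00 F1 F2 x)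
      fun j => coeffF2 F1 y η ν2 j • Dc F2 j y]
  congr!

theorem norm_sum_coeffF2_smul_le (h : KKTWith f F1 F2 t y η ν1 ν2) (hx : x ∈ Mset F1 F2)
    (hpos : ∀ j ∉ a10 F1 F2 x ∪ a00 F1 F2 x, 0 < F2 y j) :
    ‖∑ j : {j // j ∉ a10 F1 F2 x ∪ a00 F1 F2 x}, coeffF2 F1 y η ν2 j • Dc F2 j y‖ ≤
      t * (∑ j : {j // j ∉ a10 F1 F2 x ∪ a00 F1 F2 x}, ‖Dc F2 j y‖ / F2 y j ^ 2) *
        ‖activeCoeffs F1 F2 x (coeffF1 F2 y η ν1) (coeffF2 F1 y η ν2)‖ := by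
  rw [Finset.mul_sum, Finset.sum_mul]
  refine (norm_sum_le _ _).trans (Finset.sum_le_sum fun j _ => ?_)
  have hF2 := hpos j j.2
  have ht : 0 ≤ t := by nlinarith [(h.feas j).1, (h.feas j).2.1]
  have hc1 : |coeffF1 F2 y η ν1 j| ≤
      ‖activeCoeffs F1 F2 x (coeffF1 F2 y η ν1) (coeffF2 F1 y η ν2)‖ :=
    norm_le_pi_norm (activeCoeffs F1 F2 x (coeffF1 F2 y η ν1) (coeffF2 F1 y η ν2))
      (.inl ⟨j, Or.inl (mem_a01_of_notMem_a10_union_a00 hx j.2)⟩)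
  calc ‖coeffF2 F1 y η ν2 j • Dc F2 j y‖
      ≤ t * |coeffF1 F2 y η ν1 j| / F2 y j ^ 2 * ‖Dc F2 j y‖ := by
        rw [norm_smul, Real.norm_eq_abs]
        exact mul_le_mul_of_nonneg_right (h.abs_coeffF2_le hF2) (norm_nonneg _)
    _ = t * (‖Dc F2 j y‖ / F2 y j ^ 2) * |coeffF1 F2 y η ν1 j| := by ring
    _ ≤ _ := mul_le_mul_of_nonneg_left hc1 (by positivity)

end KKTWith

theorem continuous_Dc {F : (Fin n → ℝ) → Fin κ → ℝ} (hF : ContDiff ℝ 1 F) (j : Fin κ) :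
    Continuous (Dc F j) :=
  (contDiff_pi.mp hF j).continuous_fderiv one_ne_zero

section Limit

variable {α : Type*} {l : Filter α} {f : (Fin n → ℝ) → ℝ} {F1 F2 : (Fin n → ℝ) → Fin κ → ℝ}
  {xbar : Fin n → ℝ} {t : α → ℝ} {x : α → Fin n → ℝ} {η ν1 ν2 : α → Fin κ → ℝ}

theorem tendsto_activeCoeffs (hf : ContDiff ℝ 1 f) (hF1 : ContDiff ℝ 1 F1)
    (hF2 : ContDiff ℝ 1 F2) {σ1 σ2 ϱ1 ϱ2 : Fin κ → ℝ}
    (hW : WStatWith f F1 F2 xbar σ1 σ2 ϱ1 ϱ2) (hlicq : MPCCLICQ F1 F2 xbar)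
    (ha10 : a10 F1 F2 xbar = ∅) (ht : Tendsto t l (𝓝 0))
    (hkkt : ∀ a, KKTWith f F1 F2 (t a) (x a) (η a) (ν1 a) (ν2 a))
    (hx : Tendsto x l (𝓝 xbar)) :
    Tendsto (fun a => activeCoeffs F1 F2 xbar (coeffF1 F2 (x a) (η a) (ν1 a))
        (coeffF2 F1 (x a) (η a) (ν2 a))) l
      (𝓝 (activeCoeffs F1 F2 xbar (σ1 + ϱ1) (σ2 + ϱ2))) := by
  have hF2pos {j : Fin κ} (hj : j ∉ a10 F1 F2 xbar ∪ a00 F1 F2 xbar) : 0 < F2 xbar j :=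
    F2_pos_of_notMem_a10_union_a00 hW.feas hj
  have hF2lim (j : Fin κ) : Tendsto (fun a => F2 (x a) j) l (𝓝 (F2 xbar j)) :=
    (((continuous_apply j).comp hF2.continuous).tendsto xbar).comp hx
  have hDlim {F : (Fin n → ℝ) → Fin κ → ℝ} (hF : ContDiff ℝ 1 F) (j : Fin κ) :
      Tendsto (fun a => Dc F j (x a)) l (𝓝 (Dc F j xbar)) :=
    ((continuous_Dc hF j).tendsto xbar).comp hx
  have hli : LinearIndependent ℝ (activeGrads F1 F2 xbar xbar) := hlicq
  refine hli.tendsto_of_approx_linearCombination (v := fun a => activeGrads F1 F2 xbar (x a))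
    (fun i => ?_) (y := fun a => fderiv ℝ f (x a)) ?_
    (ε := fun a => t a * ∑ j : {j // j ∉ a10 F1 F2 xbar ∪ a00 F1 F2 xbar},
      ‖Dc F2 j (x a)‖ / F2 (x a) j ^ 2) ?_ ?_
  · rcases i with i | i
    exacts [hDlim hF1 i, hDlim hF2 i]
  · rw [← hW.fderiv_eq_sum_activeCoeffs]
    exact ((hf.continuous_fderiv one_ne_zero).tendsto xbar).comp hx
  · simpa using ht.mul (tendsto_finsetSum _
      fun (j : {j // j ∉ a10 F1 F2 xbar ∪ a00 F1 F2 xbar}) _ => (hDlim hF2 j).norm.div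
        ((hF2lim j).pow 2) (pow_ne_zero 2 (hF2pos j.2).ne'))
  · have hev : ∀ᶠ a in l, ∀ j ∉ a10 F1 F2 xbar ∪ a00 F1 F2 xbar, 0 < F2 (x a) j :=
      eventually_all.mpr fun j => by
        by_cases hj : j ∈ a10 F1 F2 xbar ∪ a00 F1 F2 xbar
        · exact .of_forall fun _ h => absurd hj h
        · exact ((hF2lim j).eventually_const_lt (hF2pos hj)).mono fun _ h _ => h
    filter_upwards [hev] with a ha
    rw [(hkkt a).fderiv_eq_sum_activeCoeffs_add (mem_a01_union_a00_of_a10_eq_empty hW.feas ha10),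
      sub_add_cancel_left, norm_neg]
    exact (hkkt a).norm_sum_coeffF2_smul_le hW.feas ha

variable {g1 g2 : Fin κ → ℝ}

theorem eventually_subset_N1set_union_Hset
    (hkkt : ∀ a, KKTWith f F1 F2 (t a) (x a) (η a) (ν1 a) (ν2 a))
    (hconv : Tendsto (fun a => activeCoeffs F1 F2 xbar (coeffF1 F2 (x a) (η a) (ν1 a))
      (coeffF2 F1 (x a) (η a) (ν2 a))) l (𝓝 (activeCoeffs F1 F2 xbar g1 g2))) :
    ∀ᶠ a in l, {j | j ∈ a01 F1 F2 xbar ∪ a00 F1 F2 xbar ∧ g1 j ≠ 0} ⊆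
      N1set F1 (x a) ∪ Hset F1 F2 (t a) (x a) := by
  refine ((Set.toFinite _).eventually_all.mpr ?_).mono fun a h j hj => h j hj
  rintro j ⟨hj, hg⟩
  exact ((tendsto_pi_nhds.mp hconv (.inl ⟨j, hj⟩)).eventually_ne hg).mono
    fun a ha => (hkkt a).mem_N1set_union_Hset ha

theorem eventually_subset_N2set
    (hkkt : ∀ a, KKTWith f F1 F2 (t a) (x a) (η a) (ν1 a) (ν2 a))
    (hconv : Tendsto (fun a => activeCoeffs F1 F2 xbar (coeffF1 F2 (x a) (η a) (ν1 a))
      (coeffF2 F1 (x a) (η a) (ν2 a))) l (𝓝 (activeCoeffs F1 F2 xbar g1 g2))) :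
    ∀ᶠ a in l, {j | j ∈ a10 F1 F2 xbar ∪ a00 F1 F2 xbar ∧ 0 < g2 j} ⊆ N2set F2 (x a) := by
  refine ((Set.toFinite _).eventually_all.mpr ?_).mono fun a h j hj => h j hj
  rintro j ⟨hj, hg⟩
  exact ((tendsto_pi_nhds.mp hconv (.inr ⟨j, hj⟩)).eventually_const_lt hg).mono
    fun a ha => (hkkt a).mem_N2set ha

end Limit

end

/-- in the standard-form setting, the codimension drop between the MPCC
tangent space and the tangent space of the Scholtes regularization is bounded by
`|a01⁰(x̄)| + |a00⁻(x̄)|` for all sufficiently small `t`. -/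
theorem codimension_estimate_standard_form
    {n κ : ℕ} (f : (Fin n → ℝ) → ℝ) (F1 F2 : (Fin n → ℝ) → Fin κ → ℝ)
    (hf : ContDiff ℝ 2 f) (hF1 : ContDiff ℝ 2 F1) (hF2 : ContDiff ℝ 2 F2)
    (xbar : Fin n → ℝ) (σ1 σ2 ϱ1 ϱ2 : Fin κ → ℝ)
    (hnd : NondegCStat f F1 F2 xbar σ1 σ2 ϱ1 ϱ2)
    (ha10 : a10 F1 F2 xbar = ∅)
    (t : ℕ → ℝ) (ht0 : Tendsto t atTop (𝓝 0))
    (x : ℕ → Fin n → ℝ) (η ν1 ν2 : ℕ → Fin κ → ℝ)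
    (hkkt : ∀ k, KKTWith f F1 F2 (t k) (x k) (η k) (ν1 k) (ν2 k))
    (hxlim : Tendsto x atTop (𝓝 xbar)) :
    ∃ N : ℕ, ∀ k ≥ N,
      ((a01 F1 F2 xbar).ncard : ℤ) + 2 * ((a00 F1 F2 xbar).ncard : ℤ)
        - (((Hset F1 F2 (t k) (x k)).ncard : ℤ) + ((N1set F1 (x k)).ncard : ℤ)
            + ((N2set F2 (x k)).ncard : ℤ))
        ≤ ({j | j ∈ a01 F1 F2 xbar ∧ σ1 j = 0}.ncard : ℤ)
          + ({j | j ∈ a00 F1 F2 xbar ∧ ϱ1 j < 0 ∧ ϱ2 j < 0}.ncard : ℤ) := by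
  obtain ⟨⟨hW, -⟩, hlicq, hndc2, -⟩ := hnd
  have hconv := tendsto_activeCoeffs (hf.of_le one_le_two) (hF1.of_le one_le_two)
    (hF2.of_le one_le_two) hW hlicq ha10 ht0 hkkt hxlim
  obtain ⟨N, hN⟩ := eventually_atTop.mp
    ((eventually_subset_N1set_union_Hset hkkt hconv).and (eventually_subset_N2set hkkt hconv))
  refine ⟨N, fun k hk => ?_⟩
  have := Set.ncard_add_two_mul_ncard_le disjoint_a01_a00
    (fun j hj => hj.1) (fun j hj => hj.1)
    ((hW.sdiff_union_subset_coeff_ne_zero hndc2).trans (hN k hk).1)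
    ((hW.a00_sdiff_subset_coeff_pos hndc2).trans (hN k hk).2)
  omega

end MPCCPaper
end

section
/- Let n = 3, κ = 3, f(x) = −x₁ − x₂ + 2x₁x₂ + x₃², F₁(x) = (x₁, x₁ + x₂, x₃ − 1), F₂(x) = (x₃ − 2x₂, 2 − x₃, x₁ − x₂ + x₃). Then x̄ = (0,0,1) is a nondegenerate C-stationary point of MPCC with a01(x̄) = {1,2,3}, a10(x̄) = a00(x̄) = ∅, unique multipliers σ₁,₁ = 0, σ₁,₂ = −1, σ₁,₃ = 2, and C-index equal to 0; moreover NDC4 is violated at x̄ (since σ₁,₁ = 0), and x̄ is the limit as t → 0 of the nondegenerate KKT points x^t = (t/2, t/2, 1) of the Scholtes regularization S(t), which have quadratic index 1. -/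
open Filter Topology Set

namespace MPCCPaper

variable {n κ : ℕ}

noncomputable def fEx2 : (Fin 3 → ℝ) → ℝ :=
  fun x => -x 0 - x 1 + 2 * x 0 * x 1 + (x 2)^2

noncomputable def F1Ex2 : (Fin 3 → ℝ) → Fin 3 → ℝ :=
  fun x => ![x 0, x 0 + x 1, x 2 - 1]

noncomputable def F2Ex2 : (Fin 3 → ℝ) → Fin 3 → ℝ :=
  fun x => ![x 2 - 2 * x 1, 2 - x 2, x 0 - x 1 + x 2]

noncomputable def xtEx2 (t : ℝ) : Fin 3 → ℝ := ![t/2, t/2, 1]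

noncomputable def ηEx2 (t : ℝ) : Fin 3 → ℝ := ![0, 1 - t, 0]

noncomputable def ν1Ex2 (t : ℝ) : Fin 3 → ℝ := ![0, 0, 2 - t + t^2]

noncomputable def xbarEx2 : Fin 3 → ℝ := ![0, 0, 1]

noncomputable def σ1Ex2 : Fin 3 → ℝ := ![0, -1, 2]


/-! At `x̄` every constraint is `F₁`-active with `F₂ > 0`, and the three gradients `DF₁ⱼ` form
a basis of the dual space: the multipliers are the coordinates of `Df(x̄)` in this basis, and
`T_x̄ = 0`, so the C-index is `0`. Along `x^t` only the second product constraint and the bound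
`F₁₃ ≥ 0` are active; the bound `F₁₁ = x₁ ≥ 0`, whose multiplier `σ₁₁` vanishes at `x̄`, is not.
Hence `T^S_{x^t}` is the line through `(1, -1, 0)`, on which the Hessian of the Lagrangian is the
negative definite form coming from the term `2 x₁ x₂` of `f`, and the quadratic index is `1`.
In the code, indices are shifted: `j : Fin 3` is the paper's index `j + 1`. -/

section LinearAlgebra

variable {𝕜 E ι : Type*} [NontriviallyNormedField 𝕜] [NormedAddCommGroup E] [NormedSpace 𝕜 E]

theorem linearIndependent_of_biorthogonal (φ : ι → E →L[𝕜] 𝕜) (w : ι → E)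
    (hdiag : ∀ i, φ i (w i) ≠ 0) (hoff : ∀ i j, i ≠ j → φ j (w i) = 0) :
    LinearIndependent 𝕜 φ := by
  rw [linearIndependent_iff']
  intro s g hg i hi
  have h := congrArg (fun ψ : E →L[𝕜] 𝕜 => ψ (w i)) hg
  simp only [sum_apply, smul_apply, smul_eq_mul, zero_apply] at h
  rw [Finset.sum_eq_single i (fun j _ hji => by rw [hoff i j hji.symm, mul_zero])
    (fun h => absurd hi h)] at h
  exact (mul_eq_zero.mp h).resolve_right (hdiag i)

end LinearAlgebra

section Quadratic

variable {E : Type*} [NormedAddCommGroup E] [NormedSpace ℝ E]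

theorem hasFDerivAt_quadratic (B : E →L[ℝ] E →L[ℝ] ℝ) (ℓ : E →L[ℝ] ℝ) (c : ℝ) (x : E) :
    HasFDerivAt (fun y => B y y + ℓ y + c) ((B + B.flip) x + ℓ) x := by
  have hB := B.hasFDerivAt_of_bilinear (hasFDerivAt_id x) (hasFDerivAt_id x)
  refine ((hB.add ℓ.hasFDerivAt).add_const c).congr_fderiv ?_
  ext ξ
  simp [add_comm]

theorem hBil_eq_of_quadratic {g : (Fin n → ℝ) → ℝ} (B : (Fin n → ℝ) →L[ℝ] (Fin n → ℝ) →L[ℝ] ℝ)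
    (ℓ : (Fin n → ℝ) →L[ℝ] ℝ) (c : ℝ) (hg : ∀ y, g y = B y y + ℓ y + c) (x ξ ζ : Fin n → ℝ) :
    hBil g x ξ ζ = B ξ ζ + B ζ ξ := by
  obtain rfl : g = fun y => B y y + ℓ y + c := funext hg
  have hD : fderiv ℝ (fun y => B y y + ℓ y + c) = fun y => (B + B.flip) y + ℓ :=
    funext fun y => (hasFDerivAt_quadratic B ℓ c y).fderiv
  rw [hBil, iteratedFDeriv_two_apply, hD, ((B + B.flip).hasFDerivAt.add_const ℓ).fderiv]
  simp

end Quadratic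

noncomputable def coord (i : Fin n) : (Fin n → ℝ) →L[ℝ] ℝ := ContinuousLinearMap.proj i

@[simp]
theorem coord_apply (i : Fin n) (y : Fin n → ℝ) : coord i y = y i := rfl

noncomputable def coordMul (i j : Fin n) : (Fin n → ℝ) →L[ℝ] (Fin n → ℝ) →L[ℝ] ℝ :=
  (coord i).smulRight (coord j)

@[simp]
theorem coordMul_apply (i j : Fin n) (y z : Fin n → ℝ) : coordMul i j y z = y i * z j := rfl

theorem hQ_smul (g : (Fin n → ℝ) → ℝ) (x ξ : Fin n → ℝ) (c : ℝ) :
    hQ g x (c • ξ) = c ^ 2 * hQ g x ξ := by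
  simp only [hQ, hBil, iteratedFDeriv_two_apply, Matrix.cons_val_zero, Matrix.cons_val_one,
    map_smul, smul_apply, smul_eq_mul]
  ring

theorem hQ_neg_of_mem_span_singleton {g : (Fin n → ℝ) → ℝ} {x v : Fin n → ℝ}
    (hv : hQ g x v < 0) : ∀ ξ ∈ Submodule.span ℝ {v}, ξ ≠ 0 → hQ g x ξ < 0 := by
  intro ξ hξ hne
  obtain ⟨c, rfl⟩ := Submodule.mem_span_singleton.mp hξ
  have hc : c ≠ 0 := by rintro rfl; simp at hne
  rw [hQ_smul]
  exact mul_neg_of_pos_of_neg (by positivity) hv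

theorem nondegOn_of_forall_neg {B : (Fin n → ℝ) → (Fin n → ℝ) → ℝ} {T : Set (Fin n → ℝ)}
    (h : ∀ ξ ∈ T, ξ ≠ 0 → B ξ ξ < 0) : NondegOn B T :=
  fun ξ hξ horth => by_contra fun hne => (h ξ hξ hne).ne (horth ξ hξ)

theorem hasNegIndexOn_finrank {Q : (Fin n → ℝ) → ℝ} (W : Submodule ℝ (Fin n → ℝ))
    (h : ∀ ξ ∈ W, ξ ≠ 0 → Q ξ < 0) : HasNegIndexOn Q W (Module.finrank ℝ W) :=
  ⟨⟨W, subset_rfl, rfl, h⟩, fun _ hW' _ => Submodule.finrank_mono (SetLike.coe_subset_coe.mp hW')⟩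

theorem mpccLICQ_of_a01_eq_univ {F1 F2 : (Fin n → ℝ) → Fin κ → ℝ} {x : Fin n → ℝ}
    (h01 : a01 F1 F2 x = univ) (h10 : a10 F1 F2 x = ∅) (h00 : a00 F1 F2 x = ∅)
    (hli : LinearIndependent ℝ fun j => Dc F1 j x) : MPCCLICQ F1 F2 x := by
  rw [MPCCLICQ, h01, h10, h00, union_empty, union_empty]
  refine (hli.comp _ Subtype.val_injective).sum_type linearIndependent_empty_type ?_
  simp only [range_eq_empty, Submodule.span_empty, disjoint_bot_right]

section Derivatives

theorem fderiv_coord (i : Fin n) (x : Fin n → ℝ) :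
    fderiv ℝ (fun y : Fin n → ℝ => y i) x = coord i :=
  (hasFDerivAt_apply i x).fderiv

attribute [local simp] fderiv_coord fderiv_fun_add fderiv_fun_sub fderiv_fun_mul fderiv_fun_neg
  fderiv_const_mul fderiv_const_sub fderiv_sub_const fderiv_fun_pow

theorem fderiv_fEx2_apply (x ξ : Fin 3 → ℝ) :
    fderiv ℝ fEx2 x ξ = (2 * x 1 - 1) * ξ 0 + (2 * x 0 - 1) * ξ 1 + 2 * x 2 * ξ 2 := by
  unfold fEx2
  simp (disch := fun_prop)
  ring

theorem Dc_F1Ex2_apply (j : Fin 3) (x ξ : Fin 3 → ℝ) :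
    Dc F1Ex2 j x ξ = ![ξ 0, ξ 0 + ξ 1, ξ 2] j := by
  fin_cases j <;> simp (disch := fun_prop) [Dc, F1Ex2]

theorem Dc_F2Ex2_apply (j : Fin 3) (x ξ : Fin 3 → ℝ) :
    Dc F2Ex2 j x ξ = ![ξ 2 - 2 * ξ 1, -ξ 2, ξ 0 - ξ 1 + ξ 2] j := by
  fin_cases j <;> simp (disch := fun_prop) [Dc, F2Ex2]

end Derivatives

theorem linearIndependent_Dc_F1Ex2 (x : Fin 3 → ℝ) :
    LinearIndependent ℝ fun j => Dc F1Ex2 j x := by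
  refine linearIndependent_of_biorthogonal _ ![![1, -1, 0], ![0, 1, 0], ![0, 0, 1]] ?_ ?_
  · intro i
    fin_cases i <;> simp [Dc_F1Ex2_apply]
  · intro i j hij
    fin_cases i <;> fin_cases j <;> simp [Dc_F1Ex2_apply] at hij ⊢

theorem F1Ex2_xbar : F1Ex2 xbarEx2 = 0 := by
  funext j
  fin_cases j <;> simp [F1Ex2, xbarEx2]

theorem F2Ex2_xbar : F2Ex2 xbarEx2 = 1 := by
  funext j
  fin_cases j <;> norm_num [F2Ex2, xbarEx2, Matrix.cons_val_two, Matrix.tail_cons]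

theorem a01_xbar : a01 F1Ex2 F2Ex2 xbarEx2 = univ := by
  simp [a01, F1Ex2_xbar, F2Ex2_xbar]

theorem a10_xbar : a10 F1Ex2 F2Ex2 xbarEx2 = ∅ := by
  simp [a10, F1Ex2_xbar]

theorem a00_xbar : a00 F1Ex2 F2Ex2 xbarEx2 = ∅ := by
  simp [a00, F2Ex2_xbar]

theorem fderiv_fEx2_xbar : fderiv ℝ fEx2 xbarEx2 = ∑ j, σ1Ex2 j • Dc F1Ex2 j xbarEx2 := by
  ext ξ
  simp [fderiv_fEx2_apply, Dc_F1Ex2_apply, Fin.sum_univ_three, σ1Ex2, xbarEx2]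
  ring

theorem cStatWith_xbar : CStatWith fEx2 F1Ex2 F2Ex2 xbarEx2 σ1Ex2 0 0 0 := by
  refine ⟨⟨?_, ?_, fun _ _ => rfl, fun _ _ => rfl, fun _ _ => rfl, ?_⟩, ?_⟩
  · intro j
    simp [F1Ex2_xbar, F2Ex2_xbar]
  · simp [a01_xbar]
  · simp [fderiv_fEx2_xbar]
  · simp [a00_xbar]

theorem eq_of_cStatWith_xbar {σ1 σ2 ϱ1 ϱ2 : Fin 3 → ℝ}
    (h : CStatWith fEx2 F1Ex2 F2Ex2 xbarEx2 σ1 σ2 ϱ1 ϱ2) :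
    σ1 = σ1Ex2 ∧ σ2 = 0 ∧ ϱ1 = 0 ∧ ϱ2 = 0 := by
  obtain ⟨hW, -⟩ := h
  have hσ2 : σ2 = 0 := funext fun j => hW.supp_s2 j (by simp [a10_xbar])
  have hϱ1 : ϱ1 = 0 := funext fun j => hW.supp_r1 j (by simp [a00_xbar])
  have hϱ2 : ϱ2 = 0 := funext fun j => hW.supp_r2 j (by simp [a00_xbar])
  have hstat : ∑ j, σ1 j • Dc F1Ex2 j xbarEx2 = ∑ j, σ1Ex2 j • Dc F1Ex2 j xbarEx2 := by
    rw [← fderiv_fEx2_xbar, hW.stat, hσ2, hϱ1, hϱ2]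
    simp
  exact ⟨funext (Fintype.linearIndependent_iffₛ.mp (linearIndependent_Dc_F1Ex2 _) _ _ hstat),
    hσ2, hϱ1, hϱ2⟩

theorem Tspace_xbar : Tspace F1Ex2 F2Ex2 xbarEx2 = ↑(⊥ : Submodule ℝ (Fin 3 → ℝ)) := by
  ext ξ
  simp only [Tspace, a01_xbar, a10_xbar, a00_xbar, union_empty, mem_univ, mem_empty_iff_false,
    forall_const, IsEmpty.forall_iff, and_true, mem_ofPred_eq, Submodule.bot_coe,
    mem_singleton_iff]
  constructor
  · intro h
    have h0 := h 0
    have h1 := h 1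
    have h2 := h 2
    simp only [Dc_F1Ex2_apply, Fin.isValue, Matrix.cons_val] at h0 h1 h2
    funext i
    fin_cases i <;> simp <;> linarith
  · rintro rfl j
    exact map_zero _

theorem nondegCStat_xbar : NondegCStat fEx2 F1Ex2 F2Ex2 xbarEx2 σ1Ex2 0 0 0 :=
  ⟨cStatWith_xbar,
    mpccLICQ_of_a01_eq_univ a01_xbar a10_xbar a00_xbar (linearIndependent_Dc_F1Ex2 _),
    by simp [a00_xbar], nondegOn_of_forall_neg (by simp [Tspace_xbar])⟩

theorem hasCIndex_xbar : HasCIndex fEx2 F1Ex2 F2Ex2 xbarEx2 σ1Ex2 0 0 0 0 := by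
  refine ⟨0, ?_, by simp [BIndex, a00_xbar]⟩
  rw [Tspace_xbar, ← finrank_bot ℝ (Fin 3 → ℝ)]
  exact hasNegIndexOn_finrank ⊥ (by simp)

theorem not_ndc4_xbar : ¬ NDC4 F1Ex2 F2Ex2 xbarEx2 σ1Ex2 0 :=
  fun h => h.1 0 (by simp [a01_xbar]) (by simp [σ1Ex2])

theorem tendsto_xtEx2 : Tendsto xtEx2 (𝓝[>] 0) (𝓝 xbarEx2) := by
  have hc : Continuous xtEx2 := by
    unfold xtEx2
    fun_prop
  have h0 : xtEx2 0 = xbarEx2 := by simp [xtEx2, xbarEx2]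
  exact h0 ▸ tendsto_nhdsWithin_of_tendsto_nhds (hc.tendsto 0)

theorem F1Ex2_xt (t : ℝ) : F1Ex2 (xtEx2 t) = ![t / 2, t, 0] := by
  funext j
  fin_cases j <;> simp [F1Ex2, xtEx2]

theorem F2Ex2_xt (t : ℝ) : F2Ex2 (xtEx2 t) = ![1 - t, 1, 1] := by
  funext j
  fin_cases j <;> norm_num [F2Ex2, xtEx2, Matrix.cons_val_two, Matrix.tail_cons, mul_div_cancel₀]

section Regularization

variable {t : ℝ}

theorem Hset_xt (h0 : 0 < t) : Hset F1Ex2 F2Ex2 t (xtEx2 t) = {1} := by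
  ext j
  fin_cases j <;> simp [Hset, F1Ex2_xt, F2Ex2_xt] <;> nlinarith

theorem N1set_xt (h0 : 0 < t) : N1set F1Ex2 (xtEx2 t) = {2} := by
  ext j
  fin_cases j <;> simp [N1set, F1Ex2_xt] <;> linarith

theorem N2set_xt (h1 : t < 1) : N2set F2Ex2 (xtEx2 t) = ∅ := by
  ext j
  fin_cases j <;> simp [N2set, F2Ex2_xt, sub_eq_zero, h1.ne']

theorem gradProd_one_xt (ξ : Fin 3 → ℝ) :
    gradProd F1Ex2 F2Ex2 1 (xtEx2 t) ξ = ξ 0 + ξ 1 - t * ξ 2 := by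
  simp [gradProd, F1Ex2_xt, F2Ex2_xt, Dc_F1Ex2_apply, Dc_F2Ex2_apply]
  ring

theorem two_sub_add_sq_pos : 0 < 2 - t + t ^ 2 := by
  nlinarith [sq_nonneg (t - 1 / 2)]

theorem kktWith_xt (h0 : 0 < t) (h1 : t < 1) :
    KKTWith fEx2 F1Ex2 F2Ex2 t (xtEx2 t) (ηEx2 t) (ν1Ex2 t) 0 := by
  refine ⟨?_, ?_, ?_, fun _ => le_rfl, ?_, ?_, fun _ => zero_mul _, ?_⟩
  · intro j
    fin_cases j
    · simp only [F1Ex2_xt, F2Ex2_xt]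
      simp
      exact ⟨by nlinarith, by positivity, h1.le⟩
    · simpa [F1Ex2_xt, F2Ex2_xt] using h0.le
    · simpa [F1Ex2_xt, F2Ex2_xt] using h0.le
  · intro j
    fin_cases j <;> simp [ηEx2, h1.le]
  · intro j
    fin_cases j <;> simp [ν1Ex2, two_sub_add_sq_pos.le]
  · intro j
    fin_cases j <;> simp [ηEx2, F1Ex2_xt, F2Ex2_xt]
  · intro j
    fin_cases j <;> simp [ν1Ex2, F1Ex2_xt]
  · ext ξ
    simp only [gradProd, F1Ex2_xt, F2Ex2_xt]
    simp [fderiv_fEx2_apply, Dc_F1Ex2_apply, Dc_F2Ex2_apply, Fin.sum_univ_three, ηEx2, ν1Ex2,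
      xtEx2]
    ring

theorem slicq_xt (h0 : 0 < t) (h1 : t < 1) : SLICQ F1Ex2 F2Ex2 t (xtEx2 t) := by
  rw [SLICQ, Hset_xt h0, N1set_xt h0, N2set_xt h1]
  refine linearIndependent_of_biorthogonal _
    (Sum.elim (fun _ => ![1, 0, 0]) (Sum.elim (fun _ => ![t, 0, 1]) fun _ => 0)) ?_ ?_
  · rintro (⟨_, rfl⟩ | ⟨_, rfl⟩ | ⟨_, ⟨⟩⟩) <;> simp [gradProd_one_xt, Dc_F1Ex2_apply]
  · rintro (⟨_, rfl⟩ | ⟨_, rfl⟩ | ⟨_, ⟨⟩⟩) (⟨_, rfl⟩ | ⟨_, rfl⟩ | ⟨_, ⟨⟩⟩) hij <;>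
      simp_all [gradProd_one_xt, Dc_F1Ex2_apply]

noncomputable def vEx2 : Fin 3 → ℝ := ![1, -1, 0]

theorem TspaceS_xt (h0 : 0 < t) (h1 : t < 1) :
    TspaceS F1Ex2 F2Ex2 t (xtEx2 t) = ↑(Submodule.span ℝ {vEx2}) := by
  ext ξ
  simp only [TspaceS, Hset_xt h0, N1set_xt h0, N2set_xt h1, mem_singleton_iff,
    forall_eq, mem_empty_iff_false, IsEmpty.forall_iff, implies_true, and_true, mem_ofPred_eq,
    gradProd_one_xt, Dc_F1Ex2_apply, Matrix.cons_val_two, Matrix.tail_cons, Matrix.head_cons,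
    SetLike.mem_coe, Submodule.mem_span_singleton]
  constructor
  · rintro ⟨hH, hN1⟩
    have h10 : ξ 1 = -ξ 0 := by rw [hN1] at hH; linarith
    refine ⟨ξ 0, funext fun i => ?_⟩
    fin_cases i <;> simp [vEx2, hN1, h10]
  · rintro ⟨c, rfl⟩
    simp [vEx2]

theorem hQ_LagS_vEx2 (x : Fin 3 → ℝ) :
    hQ (LagS fEx2 F1Ex2 F2Ex2 t (ηEx2 t) (ν1Ex2 t) 0) x vEx2 = -4 := by
  -- quadratic part: `2 * y 0 * y 1 + y 2 ^ 2` from `f`, `(t - 1) * (y 0 + y 1) * y 2` from the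
  -- product constraint `F1Ex2 y 1 * F2Ex2 y 1 ≤ t`
  rw [hQ, hBil_eq_of_quadratic
    (2 • coordMul 0 1 + coordMul 2 2 + (t - 1) • (coordMul 0 2 + coordMul 1 2))
    ((1 - 2 * t) • (coord 0 + coord 1) - (2 - t + t ^ 2) • coord 2)
    (2 - 2 * t + 2 * t ^ 2)]
  · simp [vEx2]
    norm_num
  · intro y
    simp [LagS, fEx2, F1Ex2, F2Ex2, ηEx2, ν1Ex2, Fin.sum_univ_three]
    ring

theorem nondegKKT_xt (h0 : 0 < t) (h1 : t < 1) :
    NondegKKT fEx2 F1Ex2 F2Ex2 t (xtEx2 t) (ηEx2 t) (ν1Ex2 t) 0 := by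
  refine ⟨kktWith_xt h0 h1, slicq_xt h0 h1, ?_, ?_, by simp [N2set_xt h1], ?_⟩
  · simp [Hset_xt h0, ηEx2, h1]
  · simp [N1set_xt h0, ν1Ex2, two_sub_add_sq_pos]
  · rw [TspaceS_xt h0 h1]
    exact nondegOn_of_forall_neg (hQ_neg_of_mem_span_singleton (by norm_num [hQ_LagS_vEx2]))

theorem hasNegIndexOn_xt (h0 : 0 < t) (h1 : t < 1) :
    HasNegIndexOn (hQ (LagS fEx2 F1Ex2 F2Ex2 t (ηEx2 t) (ν1Ex2 t) 0) (xtEx2 t))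
      (TspaceS F1Ex2 F2Ex2 t (xtEx2 t)) 1 := by
  have hv : vEx2 ≠ 0 := fun h => by simpa [vEx2] using congrFun h 0
  rw [TspaceS_xt h0 h1, ← finrank_span_singleton (K := ℝ) hv]
  exact hasNegIndexOn_finrank _ (hQ_neg_of_mem_span_singleton (by norm_num [hQ_LagS_vEx2]))

end Regularization

/-- Example (necessity of NDC4), the limit point: `x̄ = (0,0,1)` is a
nondegenerate C-stationary point with the stated active sets and unique multipliers,
C-index `0`, violating NDC4, and is the limit of the nondegenerate KKT points
`x^t = (t/2, t/2, 1)` of `S(t)`, which have quadratic index `1`. -/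
theorem example_ndc4_index_shift :
    NondegCStat fEx2 F1Ex2 F2Ex2 xbarEx2 σ1Ex2 0 0 0 ∧
    a01 F1Ex2 F2Ex2 xbarEx2 = Set.univ ∧
    a10 F1Ex2 F2Ex2 xbarEx2 = ∅ ∧
    a00 F1Ex2 F2Ex2 xbarEx2 = ∅ ∧
    (∀ σ1 σ2 ϱ1 ϱ2 : Fin 3 → ℝ, CStatWith fEx2 F1Ex2 F2Ex2 xbarEx2 σ1 σ2 ϱ1 ϱ2 →
      σ1 = σ1Ex2 ∧ σ2 = 0 ∧ ϱ1 = 0 ∧ ϱ2 = 0) ∧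
    HasCIndex fEx2 F1Ex2 F2Ex2 xbarEx2 σ1Ex2 0 0 0 0 ∧
    ¬ NDC4 F1Ex2 F2Ex2 xbarEx2 σ1Ex2 0 ∧
    Tendsto xtEx2 (𝓝[>] (0:ℝ)) (𝓝 xbarEx2) ∧
    (∀ t ∈ Set.Ioo (0:ℝ) 1, ∃ η ν1 ν2 : Fin 3 → ℝ,
      NondegKKT fEx2 F1Ex2 F2Ex2 t (xtEx2 t) η ν1 ν2 ∧
      HasNegIndexOn (hQ (LagS fEx2 F1Ex2 F2Ex2 t η ν1 ν2) (xtEx2 t))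
        (TspaceS F1Ex2 F2Ex2 t (xtEx2 t)) 1) :=
  ⟨nondegCStat_xbar, a01_xbar, a10_xbar, a00_xbar, fun _ _ _ _ => eq_of_cStatWith_xbar,
    hasCIndex_xbar, not_ndc4_xbar, tendsto_xtEx2,
    fun t ht => ⟨ηEx2 t, ν1Ex2 t, 0, nondegKKT_xt ht.1 ht.2, hasNegIndexOn_xt ht.1 ht.2⟩⟩

end MPCCPaper
end
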